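/- Fix positive integers k, d and m with 1 ≤ m ≤ d, and let q be a prime power with q > m(m−1)/2. Let f_1, …, f_k be chosen independently and uniformly at random from F_q[X_1,…,X_{k+1}]_{≤d}, and let Z denote the number of points x ∈ F_q^{k+1} with f_1(x) = ⋯ = f_k(x) = 0. Then the m-th moment of Z satisfies E[Z^m] = Σ_{r=1}^{m} C(q^{k+1}, r) · M_{r,m} · q^{−rk}, where C(N,r) denotes the binomial coefficient and M_{r,m} denotes the number of surjective functions from an m-element set onto an r-element set. -/

import Mathlib

/-!
Expanding `Z ^ m` and swapping the sums, the left side counts pairs of a tuple `f` and an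
`m`-tuple `φ` of points at which every `f i` vanishes. For fixed `φ`, with image `T` of size at
most `m ≤ d`, polynomials of degree `≤ d` take arbitrary values on `T` (products of affine forms
separating the points), so evaluation on `T` is a surjective additive map and each `f i` vanishes
on `T` for exactly a `q ^ (-|T|)` fraction of the polynomials. Grouping the `φ` by their image,
each of the `C(q ^ (k + 1), r)` sets of size `r` is the image of `M_{r,m}` maps.
-/

open Finset MvPolynomial

theorem Nat.card_subtype_forall_apply {ι α : Type*} [Finite ι] (p : α → Prop) :
    Nat.card {f : ι → α // ∀ i, p (f i)} = Nat.card {a // p a} ^ Nat.card ι := by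
  rw [Nat.card_congr (Equiv.subtypePiEquivPi (p := fun _ => p)), Nat.card_fun]

theorem sum_card_pow_eq_sum_card_forall {A V ι : Type*} [Fintype A] [Fintype V] [Fintype ι]
    [DecidableEq ι] (R : A → V → Prop) :
    ∑ a, Nat.card {x // R a x} ^ Nat.card ι =
      ∑ φ : ι → V, Nat.card {a // ∀ i, R a (φ i)} := by
  classical
  simp_rw [← Nat.card_subtype_forall_apply (ι := ι), Nat.card_eq_fintype_card,
    Fintype.card_subtype, card_filter]
  exact sum_comm

section ImageCount

variable {ι V : Type*} [Fintype ι] [Fintype V] [DecidableEq V]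

def subtypeImageEqEquivSurjective (T : Finset V) :
    {φ : ι → V // univ.image φ = T} ≃ {ψ : ι → T // Function.Surjective ψ} where
  toFun φ :=
    ⟨fun i => ⟨φ.1 i, (Finset.ext_iff.mp φ.2 _).mp (mem_image_of_mem _ (mem_univ i))⟩,
      fun t => by
        obtain ⟨i, -, hi⟩ := mem_image.mp ((Finset.ext_iff.mp φ.2 t).mpr t.2)
        exact ⟨i, Subtype.ext hi⟩⟩
  invFun ψ := ⟨fun i => ψ.1 i, by
    ext x
    simp only [mem_image, mem_univ, true_and]
    refine ⟨?_, fun hx => ?_⟩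
    · rintro ⟨i, rfl⟩
      exact (ψ.1 i).2
    · obtain ⟨i, hi⟩ := ψ.2 ⟨x, hx⟩
      exact ⟨i, congrArg Subtype.val hi⟩⟩

variable [DecidableEq ι]

theorem card_filter_image_eq (T : Finset V) :
    #{φ : ι → V | univ.image φ = T} =
      Nat.card {s : ι → Fin #T // Function.Surjective s} := by
  rw [← Fintype.card_subtype, ← Nat.card_eq_fintype_card,
    Nat.card_congr (subtypeImageEqEquivSurjective T)]
  exact Nat.card_congr <| (Equiv.arrowCongr (Equiv.refl ι) T.equivFin).subtypeEquiv fun ψ =>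
    T.equivFin.comp_surjective ψ |>.symm

theorem card_filter_card_image_eq (r : ℕ) :
    #{φ : ι → V | #(univ.image φ) = r} =
      (Fintype.card V).choose r * Nat.card {s : ι → Fin r // Function.Surjective s} := by
  rw [card_eq_sum_card_fiberwise (f := fun φ => univ.image φ) (t := powersetCard r univ)
    fun φ hφ => mem_powersetCard_univ.mpr (mem_filter.mp hφ).2]
  calc _ = ∑ T ∈ powersetCard r (univ : Finset V),
        Nat.card {s : ι → Fin r // Function.Surjective s} := by
        refine sum_congr rfl fun T hT => ?_
        rw [filter_filter, ← (mem_powersetCard_univ.mp hT), ← card_filter_image_eq]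
        congr 1
        exact filter_congr fun φ _ => and_iff_right_of_imp fun h => h ▸ rfl
    _ = _ := by rw [sum_const, card_powersetCard, card_univ, smul_eq_mul]

theorem sum_apply_card_image {M : Type*} [AddCommMonoid M] [Nonempty ι] (g : ℕ → M) :
    ∑ φ : ι → V, g #(univ.image φ) = ∑ r ∈ Icc 1 (Fintype.card ι),
      ((Fintype.card V).choose r * Nat.card {s : ι → Fin r // Function.Surjective s}) •
        g r := by
  rw [← sum_fiberwise_of_maps_to (g := fun φ => #(univ.image φ)) (t := Icc 1 (Fintype.card ι))
    fun φ _ => mem_Icc.mpr ⟨card_pos.mpr (univ_nonempty.image φ), card_image_le⟩]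
  refine sum_congr rfl fun r _ => ?_
  rw [← card_filter_card_image_eq, ← sum_const]
  exact sum_congr rfl fun φ hφ => by rw [(mem_filter.mp hφ).2]

end ImageCount

namespace MvPolynomial

variable {σ K : Type*} [Field K]

theorem exists_totalDegree_le_one_eval_eq_one_eval_eq_zero {s t : σ → K} (h : s ≠ t) :
    ∃ p : MvPolynomial σ K, p.totalDegree ≤ 1 ∧ eval t p = 1 ∧ eval s p = 0 := by
  obtain ⟨i, hi⟩ := Function.ne_iff.mp h
  refine ⟨(t i - s i)⁻¹ • (X i - C (s i)), ?_, ?_, by simp⟩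
  · exact (totalDegree_smul_le _ _).trans <| (totalDegree_sub_C_le _ _).trans (totalDegree_X i).le
  · simp [inv_mul_cancel₀ (sub_ne_zero.mpr (Ne.symm hi))]

theorem exists_totalDegree_le_eval_eq_ite [DecidableEq (σ → K)] (T : Finset (σ → K))
    {t : σ → K} (ht : t ∈ T) :
    ∃ p : MvPolynomial σ K, p.totalDegree ≤ #T - 1 ∧
      ∀ s ∈ T, eval s p = if s = t then 1 else 0 := by
  choose ℓ hℓdeg hℓt hℓs using fun s : T.erase t =>
    exists_totalDegree_le_one_eval_eq_one_eval_eq_zero (ne_of_mem_erase s.2)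
  refine ⟨∏ s ∈ (T.erase t).attach, ℓ s, ?_, fun s hs => ?_⟩
  · calc _ ≤ ∑ s ∈ (T.erase t).attach, (ℓ s).totalDegree := totalDegree_finsetProd _ _
      _ ≤ ∑ _s ∈ (T.erase t).attach, 1 := sum_le_sum fun s _ => hℓdeg s
      _ = #T - 1 := by simp [card_erase_of_mem ht]
  · split_ifs with hst
    · simp [hst, hℓt]
    · rw [map_prod]
      exact prod_eq_zero (mem_attach _ ⟨s, mem_erase.mpr ⟨hst, hs⟩⟩) (hℓs _)

theorem exists_totalDegree_le_eval_eq_on [DecidableEq (σ → K)] (T : Finset (σ → K))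
    (g : (σ → K) → K) :
    ∃ p : MvPolynomial σ K, p.totalDegree ≤ #T - 1 ∧ ∀ x ∈ T, eval x p = g x := by
  choose δ hδdeg hδ using fun t : T => exists_totalDegree_le_eval_eq_ite T t.2
  refine ⟨∑ t ∈ T.attach, g t • δ t, totalDegree_finsetSum_le fun t _ =>
    (totalDegree_smul_le _ _).trans (hδdeg t), fun x hx => ?_⟩
  simp only [map_sum, smul_eval, hδ _ _ hx, mul_ite, mul_one, mul_zero]
  rw [sum_attach T fun t => if x = t then g t else 0, sum_ite_eq, if_pos hx]

noncomputable def evalOnRestrictTotalDegree (d : ℕ) (T : Finset (σ → K)) :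
    restrictTotalDegree σ K d →+ (T → K) where
  toFun p t := eval t.1 p
  map_zero' := by ext; simp
  map_add' p q := by ext; simp

theorem evalOnRestrictTotalDegree_surjective {d : ℕ} {T : Finset (σ → K)} (hT : #T ≤ d + 1) :
    Function.Surjective (evalOnRestrictTotalDegree d T) := by
  classical
  intro g
  obtain ⟨p, hpd, hp⟩ :=
    exists_totalDegree_le_eval_eq_on T fun x => if h : x ∈ T then g ⟨x, h⟩ else 0
  refine ⟨⟨p, (mem_restrictTotalDegree _ _ _).mpr (by omega)⟩, ?_⟩
  ext t
  simpa [evalOnRestrictTotalDegree] using hp t t.2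

instance [Finite σ] [Finite K] (d : ℕ) : Finite {p : MvPolynomial σ K // p.totalDegree ≤ d} :=
  have := Module.finite_of_finite K (M := restrictTotalDegree σ K d)
  .of_equiv _ (Equiv.subtypeEquivRight fun p => mem_restrictTotalDegree σ d p)

instance {ι : Type*} [Finite ι] [Finite σ] [Finite K] (d : ℕ) :
    Finite {f : ι → MvPolynomial σ K // ∀ i, (f i).totalDegree ≤ d} :=
  .of_equiv _
    (Equiv.subtypePiEquivPi (p := fun _ (p : MvPolynomial σ K) => p.totalDegree ≤ d)).symm

theorem card_totalDegree_le_vanishing_mul [Fintype K] {d : ℕ} {T : Finset (σ → K)}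
    (hT : #T ≤ d + 1) :
    Nat.card {p : MvPolynomial σ K // p.totalDegree ≤ d ∧ ∀ x ∈ T, eval x p = 0} *
      Fintype.card K ^ #T = Nat.card {p : MvPolynomial σ K // p.totalDegree ≤ d} := by
  set E := evalOnRestrictTotalDegree (K := K) d T
  have hker :
      {p : MvPolynomial σ K // p.totalDegree ≤ d ∧ ∀ x ∈ T, eval x p = 0} ≃ E.ker :=
    { toFun p := ⟨⟨p, (mem_restrictTotalDegree _ _ _).mpr p.2.1⟩,
        E.mem_ker.mpr <| by ext t; exact p.2.2 t t.2⟩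
      invFun p := ⟨p.1, (mem_restrictTotalDegree _ _ _).mp p.1.2,
        fun x hx => congrFun (E.mem_ker.mp p.2) ⟨x, hx⟩⟩ }
  have hrange : Nat.card E.range = Fintype.card K ^ #T := by
    rw [AddMonoidHom.range_eq_top.mpr (evalOnRestrictTotalDegree_surjective hT),
      AddSubgroup.card_top, Nat.card_fun, Nat.card_eq_fintype_card, Nat.card_eq_finsetCard]
  rw [Nat.card_congr hker, ← hrange, ← AddSubgroup.index_ker, AddSubgroup.card_mul_index]
  exact Nat.card_congr (Equiv.subtypeEquivRight fun p => mem_restrictTotalDegree _ _ _)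

theorem card_pi_totalDegree_le_vanishing_mul {ι : Type*} [Finite ι] [Fintype K] {d : ℕ}
    {T : Finset (σ → K)} (hT : #T ≤ d + 1) :
    Nat.card {f : ι → MvPolynomial σ K //
        ∀ i, (f i).totalDegree ≤ d ∧ ∀ x ∈ T, eval x (f i) = 0} *
      Fintype.card K ^ (#T * Nat.card ι) =
    Nat.card {f : ι → MvPolynomial σ K // ∀ i, (f i).totalDegree ≤ d} := by
  rw [Nat.card_subtype_forall_apply fun p => p.totalDegree ≤ d ∧ ∀ x ∈ T, eval x p = 0,
    Nat.card_subtype_forall_apply fun p : MvPolynomial σ K => p.totalDegree ≤ d, pow_mul,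
    ← mul_pow, card_totalDegree_le_vanishing_mul hT]

theorem card_pi_totalDegree_le_vanishing_at_eq {ι ι' : Type*} [Finite ι] [Fintype ι']
    [DecidableEq (σ → K)] [Fintype K] {d : ℕ} (φ : ι' → σ → K)
    (hφ : Fintype.card ι' ≤ d + 1) :
    (Nat.card {f : {f : ι → MvPolynomial σ K // ∀ i, (f i).totalDegree ≤ d} //
        ∀ j i, eval (φ j) (f.1 i) = 0} : ℝ) =
      Nat.card {f : ι → MvPolynomial σ K // ∀ i, (f i).totalDegree ≤ d} *
        (Fintype.card K : ℝ) ^ (-((#(univ.image φ) * Nat.card ι : ℕ) : ℤ)) := by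
  have hequiv : {f : {f : ι → MvPolynomial σ K // ∀ i, (f i).totalDegree ≤ d} //
        ∀ j i, eval (φ j) (f.1 i) = 0} ≃
      {f : ι → MvPolynomial σ K //
        ∀ i, (f i).totalDegree ≤ d ∧ ∀ x ∈ univ.image φ, eval x (f i) = 0} :=
    (Equiv.subtypeSubtypeEquivSubtypeInter (fun f : ι → MvPolynomial σ K =>
      ∀ i, (f i).totalDegree ≤ d) fun f => ∀ j i, eval (φ j) (f i) = 0).trans <|
      Equiv.subtypeEquivRight fun f => by simp [forall_and, forall_comm (α := ι)]
  have hq : (Fintype.card K : ℝ) ≠ 0 := by exact_mod_cast Fintype.card_ne_zero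
  rw [Nat.card_congr hequiv, ← card_pi_totalDegree_le_vanishing_mul (card_image_le.trans hφ),
    Nat.cast_mul, Nat.cast_pow, zpow_neg, zpow_natCast, mul_inv_cancel_right₀ (pow_ne_zero _ hq)]

end MvPolynomial

theorem statement_8_general (k d m : ℕ) (hm : 1 ≤ m) (hmd : m ≤ d)
    (F : Type) [Field F] [Fintype F] :
    ∑' f : {f : Fin k → MvPolynomial (Fin (k + 1)) F //
        ∀ i, (f i).totalDegree ≤ d},
      ((Nat.card {x : Fin (k + 1) → F //
          ∀ i, MvPolynomial.eval x (f.1 i) = 0} : ℝ)) ^ m =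
    (∑ r ∈ Finset.Icc 1 m,
        ((Fintype.card F ^ (k + 1)).choose r : ℝ) *
          (Nat.card {g : Fin m → Fin r // Function.Surjective g} : ℝ) *
          (Fintype.card F : ℝ) ^ (-((r * k : ℕ) : ℤ))) *
      Nat.card {f : Fin k → MvPolynomial (Fin (k + 1)) F //
        ∀ i, (f i).totalDegree ≤ d} := by
  classical
  set Tuples := {f : Fin k → MvPolynomial (Fin (k + 1)) F // ∀ i, (f i).totalDegree ≤ d}
  have : Fintype Tuples := .ofFinite _
  have : Nonempty (Fin m) := ⟨⟨0, hm⟩⟩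
  calc _ = ∑ φ : Fin m → Fin (k + 1) → F,
        (Nat.card {f : Tuples // ∀ j i, eval (φ j) (f.1 i) = 0} : ℝ) := by
        rw [tsum_fintype]
        exact_mod_cast Nat.card_fin m ▸ sum_card_pow_eq_sum_card_forall
          fun (f : Tuples) x => ∀ i, eval x (f.1 i) = 0
    _ = ∑ φ : Fin m → Fin (k + 1) → F,
        Nat.card Tuples * (Fintype.card F : ℝ) ^ (-((#(univ.image φ) * k : ℕ) : ℤ)) :=
        sum_congr rfl fun φ _ => by
          have := card_pi_totalDegree_le_vanishing_at_eq (ι := Fin k) φ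
            (by simpa using hmd.trans d.le_succ)
          rwa [Nat.card_fin] at this
    _ = ∑ r ∈ Icc 1 m, ((Fintype.card F ^ (k + 1)).choose r *
          Nat.card {s : Fin m → Fin r // Function.Surjective s}) •
          (Nat.card Tuples * (Fintype.card F : ℝ) ^ (-((r * k : ℕ) : ℤ))) := by
        simpa only [Fintype.card_fun, Fintype.card_fin, nsmul_eq_mul] using
          sum_apply_card_image (ι := Fin m) (V := Fin (k + 1) → F)
          fun r => (Nat.card Tuples * (Fintype.card F : ℝ) ^ (-((r * k : ℕ) : ℤ)))
    _ = _ := by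
        rw [sum_mul]
        refine sum_congr rfl fun r _ => ?_
        simp only [nsmul_eq_mul]
        push_cast
        ring

/-- Fix `k, d, m` with `1 ≤ m ≤ d`, and let `F` be a finite field of order
`q = Fintype.card F > m(m−1)/2`. If `f₁, …, f_k` are chosen independently and uniformly at
random among polynomials in `k+1` variables of total degree at most `d`, and `Z` is the
number of common zeros in `F^(k+1)`, then
`E[Z^m] = Σ_{r=1}^m C(q^(k+1), r) · M_{r,m} · q^(−rk)`, where `M_{r,m}` is the number of
surjections from an `m`-set onto an `r`-set. Here the expectation is written in the
denominator-free form: the sum of `Z^m` over all tuples equals the right-hand side times the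
number of tuples. -/
theorem statement_8 (k d m : ℕ) (hk : 0 < k) (hm : 1 ≤ m) (hmd : m ≤ d)
    (F : Type) [Field F] [Fintype F]
    (hq : m * (m - 1) / 2 < Fintype.card F) :
    ∑' f : {f : Fin k → MvPolynomial (Fin (k + 1)) F //
        ∀ i, (f i).totalDegree ≤ d},
      ((Nat.card {x : Fin (k + 1) → F //
          ∀ i, MvPolynomial.eval x (f.1 i) = 0} : ℝ)) ^ m =
    (∑ r ∈ Finset.Icc 1 m,
        ((Fintype.card F ^ (k + 1)).choose r : ℝ) *
          (Nat.card {g : Fin m → Fin r // Function.Surjective g} : ℝ) *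
          (Fintype.card F : ℝ) ^ (-((r * k : ℕ) : ℤ))) *
      Nat.card {f : Fin k → MvPolynomial (Fin (k + 1)) F //
        ∀ i, (f i).totalDegree ≤ d} :=
  statement_8_general k d m hm hmd F
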